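/- arXiv:2006.16357 — 2 statements merged into one kernel-verified Lean document; each statement's English description precedes it below -/
import Mathlib

section
/- Let Y be a real random variable with conditional distribution given as an arbitrary probability measure, let τ ∈ (0,1), and let ρ_τ be the check function. Then any τ-quantile q of Y (i.e., P(Y ≤ q) ≥ τ and P(Y ≥ q) ≥ 1-τ) minimizes the function t ↦ E[ρ_τ(Y - t) - ρ_τ(Y)]. -/
/-!
`ρ_τ` is convex, with subgradients `τ - 1{x < 0}` and `τ - 1{x ≤ 0}` at `x`. Integrating the
subgradient inequality at `Y - q` gives `E[ρ_τ(Y - t) - ρ_τ(Y - q)] ≥ (q - t)(τ - P(Y < q))` and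
`≥ (q - t)(τ - P(Y ≤ q))`. The quantile conditions say `P(Y < q) ≤ τ ≤ P(Y ≤ q)`, so the first
bound is nonnegative when `t ≤ q` and the second when `q ≤ t`.
-/

open MeasureTheory Set

/-- The quantile check function `ρ_τ(x) = x (τ - 1{x < 0})`. -/
noncomputable def checkFun (τ x : ℝ) : ℝ := x * (τ - if x < 0 then 1 else 0)

lemma sub_mul_sub_ite_neg_le_checkFun_sub (τ a b : ℝ) :
    (a - b) * (τ - if b < 0 then 1 else 0) ≤ checkFun τ a - checkFun τ b := by
  unfold checkFun
  split_ifs <;> nlinarith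

lemma sub_mul_sub_ite_nonpos_le_checkFun_sub (τ a b : ℝ) :
    (a - b) * (τ - if b ≤ 0 then 1 else 0) ≤ checkFun τ a - checkFun τ b := by
  unfold checkFun
  split_ifs <;> nlinarith

lemma mul_sub_measureReal_le_integral {α : Type*} [MeasurableSpace α] {μ : Measure α}
    [IsProbabilityMeasure μ] {S : Set α} (hS : MeasurableSet S) {g : α → ℝ}
    (hg : Integrable g μ) (c τ : ℝ) (h : ∀ y, c * (τ - S.indicator 1 y) ≤ g y) :
    c * (τ - μ.real S) ≤ ∫ y, g y ∂μ := by
  have hind : Integrable (S.indicator (1 : α → ℝ)) μ := (integrable_const 1).indicator hS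
  calc c * (τ - μ.real S) = ∫ y, c * (τ - S.indicator 1 y) ∂μ := by
        rw [integral_const_mul, integral_sub (integrable_const τ) hind, integral_indicator_one hS,
          integral_const, probReal_univ, one_smul]
    _ ≤ ∫ y, g y ∂μ := integral_mono (((integrable_const τ).sub hind).const_mul c) hg h

theorem quantile_minimizes_expected_check_loss_general
    (μ : Measure ℝ) [IsProbabilityMeasure μ] (τ : ℝ)
    (q : ℝ)
    (hq1 : ENNReal.ofReal τ ≤ μ {y | y ≤ q})
    (hq2 : ENNReal.ofReal (1 - τ) ≤ μ {y | q ≤ y})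
    (hInt : ∀ t : ℝ, Integrable (fun y => checkFun τ (y - t) - checkFun τ y) μ) :
    ∀ t : ℝ,
      ∫ y, (checkFun τ (y - q) - checkFun τ y) ∂μ ≤
        ∫ y, (checkFun τ (y - t) - checkFun τ y) ∂μ := by
  intro t
  have hIic : τ ≤ μ.real (Iic q) := (ENNReal.ofReal_le_iff_le_toReal (measure_ne_top μ _)).1 hq1
  have hIio : μ.real (Iio q) ≤ τ := by
    have hIci := (ENNReal.ofReal_le_iff_le_toReal (measure_ne_top μ _)).1 hq2
    rw [← compl_Ici, probReal_compl_eq_one_sub measurableSet_Ici]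
    linarith [hIci, show μ.real (Ici q) = (μ {y | q ≤ y}).toReal from rfl]
  have hdiff : Integrable (fun y => checkFun τ (y - t) - checkFun τ (y - q)) μ :=
    ((hInt t).sub (hInt q)).congr (.of_forall fun y => by simp)
  suffices 0 ≤ ∫ y, (checkFun τ (y - t) - checkFun τ (y - q)) ∂μ by
    rw [← sub_nonneg, ← integral_sub (hInt t) (hInt q)]
    simpa using this
  rcases le_total t q with htq | hqt
  · have hbound := mul_sub_measureReal_le_integral measurableSet_Iio hdiff (q - t) τ fun y => by
      simpa [indicator_apply, sub_neg] using sub_mul_sub_ite_neg_le_checkFun_sub τ (y - t) (y - q)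
    nlinarith [hbound]
  · have hbound := mul_sub_measureReal_le_integral measurableSet_Iic hdiff (q - t) τ fun y => by
      simpa [indicator_apply, sub_nonpos] using
        sub_mul_sub_ite_nonpos_le_checkFun_sub τ (y - t) (y - q)
    nlinarith [hbound]

/-- Any τ-quantile of the distribution μ of a real random variable minimizes
`t ↦ E[ρ_τ(Y - t) - ρ_τ(Y)]`. -/
theorem quantile_minimizes_expected_check_loss
    (μ : Measure ℝ) [IsProbabilityMeasure μ] (τ : ℝ) (hτ : τ ∈ Set.Ioo (0 : ℝ) 1)
    (q : ℝ)
    (hq1 : ENNReal.ofReal τ ≤ μ {y | y ≤ q})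
    (hq2 : ENNReal.ofReal (1 - τ) ≤ μ {y | q ≤ y})
    (hInt : ∀ t : ℝ, Integrable (fun y => checkFun τ (y - t) - checkFun τ y) μ) :
    ∀ t : ℝ,
      ∫ y, (checkFun τ (y - q) - checkFun τ y) ∂μ ≤
        ∫ y, (checkFun τ (y - t) - checkFun τ y) ∂μ :=
  quantile_minimizes_expected_check_loss_general μ τ q hq1 hq2 hInt
end

section
/- Let ℓ : ℝ^d → ℝ be convex and suppose θ̂ minimizes ℓ over the affine subspace {θ : θ_j = 0 for j ∈ S^c}. If for every j ∈ S^c each element of the subgradient set of ℓ at θ̂ in the j-th coordinate is at most λ in absolute value, then θ̂ is a local minimizer of θ ↦ ℓ(θ) + λ Σ_{j∈S^c}|θ_j| over ℝ^d. -/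
open Matrix

/-! Separating the open strict epigraph of `ℓ` from the slice `V × {ℓ θ̂}`, where `V` is the
subspace of vectors vanishing off `S`, yields a subgradient `g` of `ℓ` at `θ̂` that vanishes on `V`,
i.e. `g j = 0` for `j ∈ S`. Hence `ℓ θ - ℓ θ̂ ≥ ∑_{j ∉ S} g j θ j ≥ -λ ∑_{j ∉ S} |θ j|`, so `θ̂` is
even a global minimizer of the penalized objective. -/

open Filter Topology Set

section Subgradient

variable {E : Type*} [AddCommGroup E] [Module ℝ E] [TopologicalSpace E]
  [IsTopologicalAddGroup E] [ContinuousSMul ℝ E] {f : E → ℝ} {C : Set E} {x : E}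

theorem ConvexOn.exists_separation_epigraph_of_isMinOn (hf : ConvexOn ℝ univ f)
    (hcont : Continuous f) (hC : Convex ℝ C) (hx : x ∈ C) (hmin : IsMinOn f C x) :
    ∃ φ : StrongDual ℝ (E × ℝ), φ (0, 1) < 0 ∧ ∀ y, ∀ c ∈ C, φ (y, f y) ≤ φ (c, f x) := by
  have hA : Convex ℝ {p : E × ℝ | f p.1 < p.2} := by
    simpa using hf.convex_strict_epigraph
  have hB : Convex ℝ (C ×ˢ {f x}) := hC.prod (convex_singleton _)
  have hdisj : Disjoint {p : E × ℝ | f p.1 < p.2} (C ×ˢ {f x}) := by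
    refine Set.disjoint_left.2 fun p (hp : f p.1 < p.2) ⟨hpC, hpx⟩ => ?_
    have : f x ≤ f p.1 := hmin hpC
    rw [mem_singleton_iff.1 hpx] at hp
    linarith
  obtain ⟨φ, u, hφA, hφB⟩ := geometric_hahn_banach_open hA
    (isOpen_lt (hcont.comp continuous_fst) continuous_snd) hB hdisj
  have hB' : ∀ c ∈ C, u ≤ φ (c, f x) := fun c hc => hφB _ ⟨hc, rfl⟩
  -- `(y, f y)` lies in the closure of the strict epigraph.
  have hgraph : ∀ y, φ (y, f y) ≤ u := by
    intro y
    have hlim : Tendsto (fun t => φ (y, t)) (𝓝[>] f y) (𝓝 (φ (y, f y))) :=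
      ((φ.continuous.comp (Continuous.prodMk_right y)).tendsto _).mono_left nhdsWithin_le_nhds
    exact le_of_tendsto hlim (eventually_nhdsWithin_of_forall fun t ht => (hφA _ ht).le)
  refine ⟨φ, ?_, fun y c hc => (hgraph y).trans (hB' c hc)⟩
  have h := (hφA (x, f x + 1) (by simp)).trans_le (hB' x hx)
  have hsplit : (x, f x + 1) = (x, f x) + ((0 : E), (1 : ℝ)) := by simp
  rw [hsplit, map_add] at h
  linarith

theorem ConvexOn.exists_subgradient_of_isMinOn (hf : ConvexOn ℝ univ f)
    (hcont : Continuous f) (hC : Convex ℝ C) (hx : x ∈ C) (hmin : IsMinOn f C x) :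
    ∃ g : StrongDual ℝ E, (∀ y, f x + g (y - x) ≤ f y) ∧ ∀ c ∈ C, 0 ≤ g (c - x) := by
  obtain ⟨φ, hφ, hsep⟩ := hf.exists_separation_epigraph_of_isMinOn hcont hC hx hmin
  have hsplit : ∀ y t, φ (y, t) = φ (y, 0) + t * φ (0, 1) := by
    intro y t
    rw [← smul_eq_mul, ← map_smul, ← map_add]
    simp
  set g : StrongDual ℝ E := (-φ (0, 1))⁻¹ • φ.comp (.inl ℝ E ℝ)
  have hg : ∀ y z, g (y - z) = (φ (y, 0) - φ (z, 0)) / -φ (0, 1) := by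
    intro y z
    rw [map_sub, sub_div]
    simp [g, div_eq_inv_mul]
  refine ⟨g, fun y => ?_, fun c hc => ?_⟩
  · have h := hsep y x hx
    rw [hsplit y, hsplit x] at h
    have : (φ (y, 0) - φ (x, 0)) / -φ (0, 1) ≤ f y - f x := by
      rw [div_le_iff₀ (neg_pos.2 hφ)]
      linarith
    linarith [hg y x]
  · have h := hsep x c hc
    rw [hsplit c, hsplit x] at h
    rw [hg]
    exact div_nonneg (by linarith) (neg_pos.2 hφ).le

theorem ConvexOn.exists_subgradient_of_isMinOn_submodule (hf : ConvexOn ℝ univ f)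
    (hcont : Continuous f) {V : Submodule ℝ E} (hx : x ∈ V) (hmin : IsMinOn f V x) :
    ∃ g : StrongDual ℝ E, (∀ y, f x + g (y - x) ≤ f y) ∧ ∀ v ∈ V, g v = 0 := by
  obtain ⟨g, hsub, hV⟩ := hf.exists_subgradient_of_isMinOn hcont V.convex hx hmin
  refine ⟨g, hsub, fun v hv => le_antisymm ?_ ?_⟩
  · simpa using hV (x - v) (V.sub_mem hx hv)
  · simpa using hV (x + v) (V.add_mem hx hv)

end Subgradient

theorem dotProduct_apply_single {ι F : Type*} [Fintype ι] [DecidableEq ι]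
    [FunLike F (ι → ℝ) ℝ] [LinearMapClass F ℝ (ι → ℝ) ℝ] (g : F) (x : ι → ℝ) :
    (fun j => g (Pi.single j 1)) ⬝ᵥ x = g x := by
  conv_rhs => rw [← Finset.univ_sum_single x, map_sum]
  refine Finset.sum_congr rfl fun i _ => ?_
  have : Pi.single i (x i) = x i • Pi.single i (1 : ℝ) := by
    rw [← Pi.single_smul', smul_eq_mul, mul_one]
  rw [this, map_smul, smul_eq_mul, mul_comm]

theorem neg_mul_sum_abs_le_sum_mul {ι : Type*} {s : Finset ι} {g θ : ι → ℝ} {lam : ℝ}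
    (hg : ∀ j ∈ s, |g j| ≤ lam) : -(lam * ∑ j ∈ s, |θ j|) ≤ ∑ j ∈ s, g j * θ j := by
  rw [Finset.mul_sum, ← Finset.sum_neg_distrib]
  refine Finset.sum_le_sum fun j hj => ?_
  have : |g j * θ j| ≤ lam * |θ j| := by
    rw [abs_mul]
    exact mul_le_mul_of_nonneg_right (hg j hj) (abs_nonneg _)
  linarith [neg_abs_le (g j * θ j)]

section Penalty

variable {ι : Type*} [Fintype ι] [DecidableEq ι] {S : Finset ι}

theorem dotProduct_sub_eq_sum_compl {g θ θ₀ : ι → ℝ} (hg : ∀ j ∈ S, g j = 0)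
    (hθ₀ : ∀ j ∉ S, θ₀ j = 0) : g ⬝ᵥ (θ - θ₀) = ∑ j ∈ Sᶜ, g j * θ j := by
  rw [dotProduct, ← Finset.sum_add_sum_compl S, Finset.sum_eq_zero fun j hj => by simp [hg j hj],
    zero_add]
  refine Finset.sum_congr rfl fun j hj => ?_
  simp [hθ₀ j (Finset.mem_compl.1 hj)]

theorem isMinOn_add_mul_sum_abs_of_subgradient {ℓ : (ι → ℝ) → ℝ} {g θ₀ : ι → ℝ} {lam : ℝ}
    (hsub : ∀ θ, ℓ θ₀ + g ⬝ᵥ (θ - θ₀) ≤ ℓ θ) (hgS : ∀ j ∈ S, g j = 0)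
    (hg : ∀ j ∉ S, |g j| ≤ lam) (hθ₀ : ∀ j ∉ S, θ₀ j = 0) :
    IsMinOn (fun θ => ℓ θ + lam * ∑ j ∈ Sᶜ, |θ j|) univ θ₀ := by
  refine isMinOn_univ_iff.2 fun θ => ?_
  have hpen : ∑ j ∈ Sᶜ, |θ₀ j| = 0 :=
    Finset.sum_eq_zero fun j hj => by simp [hθ₀ j (Finset.mem_compl.1 hj)]
  have hsubθ := hsub θ
  rw [dotProduct_sub_eq_sum_compl hgS hθ₀] at hsubθ
  have := neg_mul_sum_abs_le_sum_mul (θ := θ) fun j hj => hg j (Finset.mem_compl.1 hj)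
  simp only [hpen, mul_zero, add_zero]
  linarith

end Penalty

theorem zero_coordinate_subgradient_local_min_general
    (d : ℕ) (ℓ : (Fin d → ℝ) → ℝ) (hconv : ConvexOn ℝ Set.univ ℓ)
    (S : Finset (Fin d)) (lam : ℝ)
    (θhat : Fin d → ℝ)
    (hzero : ∀ j ∉ S, θhat j = 0)
    (hmin : ∀ θ : Fin d → ℝ, (∀ j ∉ S, θ j = 0) → ℓ θhat ≤ ℓ θ)
    (hsub : ∀ g : Fin d → ℝ,
      (∀ φ : Fin d → ℝ, ℓ θhat + g ⬝ᵥ (φ - θhat) ≤ ℓ φ) → ∀ j ∉ S, |g j| ≤ lam) :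
    IsLocalMin (fun θ => ℓ θ + lam * ∑ j ∈ Sᶜ, |θ j|) θhat := by
  let V : Submodule ℝ (Fin d → ℝ) := Submodule.pi (↑Sᶜ : Set (Fin d)) fun _ => ⊥
  have hV : ∀ θ, θ ∈ V ↔ ∀ j ∉ S, θ j = 0 := by simp [V]
  have hcont : Continuous ℓ := continuousOn_univ.1 (hconv.continuousOn isOpen_univ)
  obtain ⟨g, hgsub, hgV⟩ := hconv.exists_subgradient_of_isMinOn_submodule hcont
    ((hV θhat).2 hzero) fun θ hθ => hmin θ ((hV θ).1 hθ)
  set gv : Fin d → ℝ := fun j => g (Pi.single j 1)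
  have hgvsub : ∀ φ, ℓ θhat + gv ⬝ᵥ (φ - θhat) ≤ ℓ φ := fun φ => by
    rw [dotProduct_apply_single]
    exact hgsub φ
  have hgvS : ∀ j ∈ S, gv j = 0 := fun j hj =>
    hgV _ ((hV _).2 fun i hi => Pi.single_eq_of_ne (by rintro rfl; exact hi hj) _)
  exact (isMinOn_add_mul_sum_abs_of_subgradient hgvsub hgvS (hsub gv hgvsub) hzero).isLocalMin
    univ_mem

/-- Zero-coordinate subgradient argument: if `θ̂` minimizes a convex `ℓ` over the
subspace of vectors vanishing outside `S`, and every subgradient of `ℓ` at `θ̂` has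
coordinates outside `S` bounded by `λ` in absolute value, then `θ̂` is a local
minimizer of `θ ↦ ℓ(θ) + λ Σ_{j∈Sᶜ} |θ_j|`. -/
theorem zero_coordinate_subgradient_local_min
    (d : ℕ) (ℓ : (Fin d → ℝ) → ℝ) (hconv : ConvexOn ℝ Set.univ ℓ)
    (S : Finset (Fin d)) (lam : ℝ) (hlam : 0 < lam)
    (θhat : Fin d → ℝ)
    (hzero : ∀ j ∉ S, θhat j = 0)
    (hmin : ∀ θ : Fin d → ℝ, (∀ j ∉ S, θ j = 0) → ℓ θhat ≤ ℓ θ)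
    (hsub : ∀ g : Fin d → ℝ,
      (∀ φ : Fin d → ℝ, ℓ θhat + g ⬝ᵥ (φ - θhat) ≤ ℓ φ) → ∀ j ∉ S, |g j| ≤ lam) :
    IsLocalMin (fun θ => ℓ θ + lam * ∑ j ∈ Sᶜ, |θ j|) θhat :=
  zero_coordinate_subgradient_local_min_general d ℓ hconv S lam θhat hzero hmin hsub
end
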